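/- For every integer n ≥ 3, the commutator subgroup SG_n' = [SG_n, SG_n] of the singular braid group SG_n equals the subgroup of SG_n generated by the set of all elements α_{m,k,i} = σ_1^m ρ_1^k σ_i ρ_1^{−k} σ_1^{−1} σ_1^{−m} and β_{m,k,i} = σ_1^m ρ_1^k ρ_i ρ_1^{−k} ρ_1^{−1} σ_1^{−m}, where m, k range over all integers and i ranges over 1, …, n−1. -/

import Mathlib

namespace SingBraid

/-- The free-group generator word for `σ_{i+1}` (0-indexed `i`). -/
def σw (n : ℕ) (i : Fin (n-1)) : FreeGroup (Fin (n-1) ⊕ Fin (n-1)) := FreeGroup.of (Sum.inl i)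

/-- The free-group generator word for `ρ_{i+1}` (0-indexed `i`). -/
def ρw (n : ℕ) (i : Fin (n-1)) : FreeGroup (Fin (n-1) ⊕ Fin (n-1)) := FreeGroup.of (Sum.inr i)

/-- Defining relators of the singular braid group `SG_n`. -/
def sgRels (n : ℕ) : Set (FreeGroup (Fin (n-1) ⊕ Fin (n-1))) :=
  {r | ∃ i j : Fin (n-1), ((i:ℕ)+1 < (j:ℕ) ∨ (j:ℕ)+1 < (i:ℕ)) ∧
      r = σw n i * σw n j * (σw n i)⁻¹ * (σw n j)⁻¹} ∪
  {r | ∃ i j : Fin (n-1), (j:ℕ) = (i:ℕ)+1 ∧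
      r = σw n i * σw n j * σw n i * (σw n j * σw n i * σw n j)⁻¹} ∪
  {r | ∃ i j : Fin (n-1), ((i:ℕ)+1 < (j:ℕ) ∨ (j:ℕ)+1 < (i:ℕ)) ∧
      r = ρw n i * ρw n j * (ρw n i)⁻¹ * (ρw n j)⁻¹} ∪
  {r | ∃ i j : Fin (n-1), (j:ℕ) = (i:ℕ)+1 ∧
      r = ρw n i * σw n j * σw n i * (σw n j * σw n i * ρw n j)⁻¹} ∪
  {r | ∃ i j : Fin (n-1), (j:ℕ) = (i:ℕ)+1 ∧
      r = ρw n j * σw n i * σw n j * (σw n i * σw n j * ρw n i)⁻¹} ∪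
  {r | ∃ i j : Fin (n-1), (i = j ∨ (i:ℕ)+1 < (j:ℕ) ∨ (j:ℕ)+1 < (i:ℕ)) ∧
      r = σw n i * ρw n j * (σw n i)⁻¹ * (ρw n j)⁻¹}

/-- The singular braid group `SG_n`, given by the Baez–Birman presentation. -/
abbrev SG (n : ℕ) := PresentedGroup (sgRels n)

/-- The generator `σ_{i+1}` of `SG_n` (0-indexed `i`). -/
def σ (n : ℕ) (i : Fin (n-1)) : SG n := PresentedGroup.of (Sum.inl i)

/-- The generator `ρ_{i+1}` of `SG_n` (0-indexed `i`). -/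
def ρ (n : ℕ) (i : Fin (n-1)) : SG n := PresentedGroup.of (Sum.inr i)

end SingBraid

namespace SingBraid

/-- The element `α_{m,k,i} = σ₁^m ρ₁^k σ_i ρ₁^{-k} σ₁^{-1} σ₁^{-m}` of `SG_n`. -/
def alphaElt (n : ℕ) (h : 0 < n - 1) (m k : ℤ) (i : Fin (n-1)) : SG n :=
  σ n ⟨0, h⟩ ^ m * ρ n ⟨0, h⟩ ^ k * σ n i * ρ n ⟨0, h⟩ ^ (-k) *
    (σ n ⟨0, h⟩)⁻¹ * σ n ⟨0, h⟩ ^ (-m)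

/-- The element `β_{m,k,i} = σ₁^m ρ₁^k ρ_i ρ₁^{-k} ρ₁^{-1} σ₁^{-m}` of `SG_n`. -/
def betaElt (n : ℕ) (h : 0 < n - 1) (m k : ℤ) (i : Fin (n-1)) : SG n :=
  σ n ⟨0, h⟩ ^ m * ρ n ⟨0, h⟩ ^ k * ρ n i * ρ n ⟨0, h⟩ ^ (-k) *
    (ρ n ⟨0, h⟩)⁻¹ * σ n ⟨0, h⟩ ^ (-m)

end SingBraid

/-!
Let `H` be the subgroup generated by the `α_{m,k,i}` and `β_{m,k,i}`. Each `α_{m,k,i}` is a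
conjugate of `σ_i σ₁⁻¹` by `σ₁^m ρ₁^k`, and each `β_{m,k,i}` one of `ρ_i ρ₁⁻¹`. The braid relations
make consecutive `σ_i` (and consecutive `ρ_i`) conjugate, so all of these lie in `SG_n'`.

Conversely, `σ₁` and `ρ₁` commute, so `(m, k) ↦ σ₁^m ρ₁^k` is a homomorphism `ℤ² → SG_n`, split
by the degree map `SG_n → ℤ²` that counts `σ`'s and `ρ`'s. Conjugation by `σ₁^m ρ₁^k` permutes the
`α`'s and `β`'s, and `σ_i = α_{0,0,i} σ₁`, `ρ_i = β_{0,0,i} ρ₁`. Hence `SG_n = H ⋊ ℤ²` and `H` is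
the kernel of the degree map, which contains `SG_n'` since `ℤ²` is abelian.
-/

theorem Abelianization.of_eq_of_semiconjBy {G : Type*} [Group G] {a b c : G}
    (h : SemiconjBy c a b) : of a = of b := by
  have h' := congrArg of h.eq
  rw [map_mul, map_mul, mul_comm (of b)] at h'
  exact mul_left_cancel h'

theorem Abelianization.mul_inv_mem_commutator_iff {G : Type*} [Group G] {a b : G} :
    a * b⁻¹ ∈ commutator G ↔ of a = of b := by
  rw [← ker_of, MonoidHom.mem_ker, map_mul, map_inv, mul_inv_eq_one]

theorem Fin.apply_eq_apply_of_apply_succ_eq {α : Type*} {N : ℕ} (f : Fin N → α)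
    (h : ∀ i j : Fin N, (j : ℕ) = i + 1 → f j = f i) (i j : Fin N) : f i = f j := by
  have hN : 0 < N := i.pos
  have key : ∀ t (ht : t < N), f ⟨t, ht⟩ = f ⟨0, hN⟩ := by
    intro t
    induction t with
    | zero => intro _; rfl
    | succ t ih => intro ht; rw [h ⟨t, by omega⟩ ⟨t + 1, ht⟩ rfl, ih]
  rw [key i i.isLt, key j j.isLt]

theorem Subgroup.eq_ker_of_sup_range_eq_top {G A : Type*} [Group G] [Group A] {H : Subgroup G}
    {f : G →* A} {s : A →* G} (hfs : ∀ a, f (s a) = a) (hHf : H ≤ f.ker)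
    (hnorm : s.range ≤ normalizer H) (hsup : H ⊔ s.range = ⊤) : H = f.ker := by
  refine le_antisymm hHf fun x hx => ?_
  have hx' : x ∈ ((H ⊔ s.range : Subgroup G) : Set G) := by rw [hsup]; trivial
  rw [coe_mul_of_right_le_normalizer_left H s.range hnorm] at hx'
  obtain ⟨h, hh, _, ⟨a, rfl⟩, rfl⟩ := hx'
  have ha : a = 1 := by simpa [MonoidHom.mem_ker.mp (hHf hh), hfs] using hx
  simpa [ha] using hh

namespace SingBraid

variable {n : ℕ}

theorem σ_commute_ρ (i : Fin (n-1)) : Commute (σ n i) (ρ n i) :=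
  PresentedGroup.mk_eq_mk_of_mul_inv_mem (rels := sgRels n) (x := σw n i * ρw n i)
    (y := ρw n i * σw n i) (by
      rw [mul_inv_rev, ← mul_assoc]
      exact Or.inr ⟨i, i, Or.inl rfl, rfl⟩)

theorem σ_braid (i j : Fin (n-1)) (hij : (j : ℕ) = i + 1) :
    σ n i * σ n j * σ n i = σ n j * σ n i * σ n j :=
  PresentedGroup.mk_eq_mk_of_mul_inv_mem (Or.inl <| Or.inl <| Or.inl <| Or.inl <| Or.inr
    ⟨i, j, hij, rfl⟩)

theorem ρ_σ_braid (i j : Fin (n-1)) (hij : (j : ℕ) = i + 1) :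
    ρ n i * σ n j * σ n i = σ n j * σ n i * ρ n j :=
  PresentedGroup.mk_eq_mk_of_mul_inv_mem (Or.inl <| Or.inl <| Or.inr ⟨i, j, hij, rfl⟩)

theorem of_σ_eq (i j : Fin (n-1)) : Abelianization.of (σ n i) = Abelianization.of (σ n j) :=
  Fin.apply_eq_apply_of_apply_succ_eq _ (fun i j hij => Abelianization.of_eq_of_semiconjBy <| by
    rw [SemiconjBy, ← mul_assoc]; exact (σ_braid i j hij).symm) i j

theorem of_ρ_eq (i j : Fin (n-1)) : Abelianization.of (ρ n i) = Abelianization.of (ρ n j) :=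
  Fin.apply_eq_apply_of_apply_succ_eq _ (fun i j hij => Abelianization.of_eq_of_semiconjBy <| by
    rw [SemiconjBy, ← mul_assoc]; exact (ρ_σ_braid i j hij).symm) i j

def degree (n : ℕ) : SG n →* Multiplicative ℤ × Multiplicative ℤ :=
  PresentedGroup.toGroup (f := Sum.elim (fun _ => (Multiplicative.ofAdd 1, 1))
    (fun _ => (1, Multiplicative.ofAdd 1))) <| by
      rintro r (((((⟨i, j, -, rfl⟩ | ⟨i, j, -, rfl⟩) | ⟨i, j, -, rfl⟩) | ⟨i, j, -, rfl⟩) |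
        ⟨i, j, -, rfl⟩) | ⟨i, j, -, rfl⟩) <;> simp [σw, ρw, mul_comm, mul_assoc]

def sigmaRhoPow (n : ℕ) (h : 0 < n - 1) : Multiplicative ℤ × Multiplicative ℤ →* SG n :=
  (zpowersHom _ (σ n ⟨0, h⟩)).noncommCoprod (zpowersHom _ (ρ n ⟨0, h⟩))
    fun _ _ => (σ_commute_ρ _).zpow_zpow _ _

theorem sigmaRhoPow_apply (h : 0 < n - 1) (m k : ℤ) :
    sigmaRhoPow n h (.ofAdd m, .ofAdd k) = σ n ⟨0, h⟩ ^ m * ρ n ⟨0, h⟩ ^ k := rfl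

theorem degree_σ (i : Fin (n-1)) : degree n (σ n i) = (.ofAdd 1, 1) :=
  PresentedGroup.toGroup.of _

theorem degree_ρ (i : Fin (n-1)) : degree n (ρ n i) = (1, .ofAdd 1) :=
  PresentedGroup.toGroup.of _

theorem degree_sigmaRhoPow (h : 0 < n - 1) (p : Multiplicative ℤ × Multiplicative ℤ) :
    degree n (sigmaRhoPow n h p) = p := by
  change degree n (sigmaRhoPow n h (.ofAdd p.1.toAdd, .ofAdd p.2.toAdd)) = p
  rw [sigmaRhoPow_apply, map_mul, map_zpow, map_zpow, degree_σ, degree_ρ]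
  simp [← ofAdd_zsmul]

theorem alphaElt_eq_conj (h : 0 < n - 1) (m k : ℤ) (i : Fin (n-1)) :
    alphaElt n h m k i = sigmaRhoPow n h (.ofAdd m, .ofAdd k) * (σ n i * (σ n ⟨0, h⟩)⁻¹) *
      (sigmaRhoPow n h (.ofAdd m, .ofAdd k))⁻¹ := by
  have hc : ρ n ⟨0, h⟩ ^ (-k) * (σ n ⟨0, h⟩)⁻¹ = (σ n ⟨0, h⟩)⁻¹ * ρ n ⟨0, h⟩ ^ (-k) :=
    ((σ_commute_ρ _).inv_left.zpow_right _).eq.symm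
  rw [sigmaRhoPow_apply, alphaElt, mul_assoc _ (ρ n _ ^ (-k)), hc]
  group

theorem betaElt_eq_conj (h : 0 < n - 1) (m k : ℤ) (i : Fin (n-1)) :
    betaElt n h m k i = sigmaRhoPow n h (.ofAdd m, .ofAdd k) * (ρ n i * (ρ n ⟨0, h⟩)⁻¹) *
      (sigmaRhoPow n h (.ofAdd m, .ofAdd k))⁻¹ := by
  rw [sigmaRhoPow_apply, betaElt]
  group

theorem conj_alphaElt (h : 0 < n - 1) (q : Multiplicative ℤ × Multiplicative ℤ) (m k : ℤ)
    (i : Fin (n-1)) : sigmaRhoPow n h q * alphaElt n h m k i * (sigmaRhoPow n h q)⁻¹ =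
      alphaElt n h (q.1.toAdd + m) (q.2.toAdd + k) i := by
  have hqp : q * (.ofAdd m, .ofAdd k) = (.ofAdd (q.1.toAdd + m), .ofAdd (q.2.toAdd + k)) := rfl
  rw [alphaElt_eq_conj, alphaElt_eq_conj, ← hqp, map_mul]
  group

theorem conj_betaElt (h : 0 < n - 1) (q : Multiplicative ℤ × Multiplicative ℤ) (m k : ℤ)
    (i : Fin (n-1)) : sigmaRhoPow n h q * betaElt n h m k i * (sigmaRhoPow n h q)⁻¹ =
      betaElt n h (q.1.toAdd + m) (q.2.toAdd + k) i := by
  have hqp : q * (.ofAdd m, .ofAdd k) = (.ofAdd (q.1.toAdd + m), .ofAdd (q.2.toAdd + k)) := rfl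
  rw [betaElt_eq_conj, betaElt_eq_conj, ← hqp, map_mul]
  group

def alphaBetaSet (n : ℕ) (h : 0 < n - 1) : Set (SG n) :=
  {x | ∃ m k : ℤ, ∃ i : Fin (n-1), x = alphaElt n h m k i ∨ x = betaElt n h m k i}

theorem closure_alphaBetaSet_le_commutator (h : 0 < n - 1) :
    Subgroup.closure (alphaBetaSet n h) ≤ commutator (SG n) := by
  rw [Subgroup.closure_le]
  rintro _ ⟨m, k, i, rfl | rfl⟩
  · rw [alphaElt_eq_conj]
    exact Subgroup.Normal.conj_mem inferInstance _
      (Abelianization.mul_inv_mem_commutator_iff.mpr (of_σ_eq i _)) _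
  · rw [betaElt_eq_conj]
    exact Subgroup.Normal.conj_mem inferInstance _
      (Abelianization.mul_inv_mem_commutator_iff.mpr (of_ρ_eq i _)) _

theorem range_sigmaRhoPow_le_normalizer (h : 0 < n - 1) :
    (sigmaRhoPow n h).range ≤
      Subgroup.normalizer (Subgroup.closure (alphaBetaSet n h) : Set (SG n)) := by
  rw [Subgroup.le_normalizer_closure_iff]
  rintro _ ⟨q, rfl⟩ _ ⟨m, k, i, rfl | rfl⟩
  · exact Subgroup.subset_closure ⟨_, _, i, Or.inl (conj_alphaElt h q m k i)⟩
  · exact Subgroup.subset_closure ⟨_, _, i, Or.inr (conj_betaElt h q m k i)⟩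

theorem closure_alphaBetaSet_sup_range_sigmaRhoPow_eq_top (h : 0 < n - 1) :
    Subgroup.closure (alphaBetaSet n h) ⊔ (sigmaRhoPow n h).range = ⊤ := by
  rw [eq_top_iff, ← PresentedGroup.closure_range_of, Subgroup.closure_le]
  rintro _ ⟨i | i, rfl⟩
  · have hσ : alphaElt n h 0 0 i * σ n ⟨0, h⟩ = σ n i := by simp [alphaElt]
    change σ n i ∈ _
    rw [← hσ]
    exact mul_mem (Subgroup.mem_sup_left (Subgroup.subset_closure ⟨0, 0, i, Or.inl rfl⟩))
      (Subgroup.mem_sup_right ⟨_, (sigmaRhoPow_apply h 1 0).trans (by simp)⟩)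
  · have hρ : betaElt n h 0 0 i * ρ n ⟨0, h⟩ = ρ n i := by simp [betaElt]
    change ρ n i ∈ _
    rw [← hρ]
    exact mul_mem (Subgroup.mem_sup_left (Subgroup.subset_closure ⟨0, 0, i, Or.inr rfl⟩))
      (Subgroup.mem_sup_right ⟨_, (sigmaRhoPow_apply h 0 1).trans (by simp)⟩)

end SingBraid

open SingBraid in
/-- For every `n ≥ 3`, the commutator subgroup of `SG_n` is generated by the elements
`α_{m,k,i}` and `β_{m,k,i}`, for `m, k ∈ ℤ` and `1 ≤ i ≤ n-1`. -/
theorem sg_commutator_eq_closure_alpha_beta (n : ℕ) (hn : 3 ≤ n) :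
    Subgroup.closure {x : SG n | ∃ m k : ℤ, ∃ i : Fin (n-1),
        x = alphaElt n (by omega) m k i ∨ x = betaElt n (by omega) m k i}
      = commutator (SG n) := by
  have h : 0 < n - 1 := by omega
  change Subgroup.closure (alphaBetaSet n h) = commutator (SG n)
  have hle := closure_alphaBetaSet_le_commutator h
  have hker : Subgroup.closure (alphaBetaSet n h) = (degree n).ker :=
    Subgroup.eq_ker_of_sup_range_eq_top (degree_sigmaRhoPow h)
      (hle.trans (Abelianization.commutator_subset_ker _))
      (range_sigmaRhoPow_le_normalizer h) (closure_alphaBetaSet_sup_range_sigmaRhoPow_eq_top h)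
  exact le_antisymm hle (hker ▸ Abelianization.commutator_subset_ker _)
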